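/- Let P be a shape-invariant predicate on subsets of V, and let σ̄_1 and σ̄_2 be two distinct k-feasible shapes. Then σ̄_1 and σ̄_2 are adjacent in the size-k shape graph if and only if there exist sets S_1, S_2 ⊆ V, both satisfying P, with |S_1| = |S_2| = k, such that S_1 has shape σ̄_1, S_2 has shape σ̄_2, and |S_1 ∖ S_2| = |S_2 ∖ S_1| = 1. -/

import Mathlib

/-! Shapes framework: `V` is a finite type partitioned into types `Vp 0, …, Vp (t-1)`;
`q ≥ 1` is a fixed integer. A shape is a function `Fin t → Option ℕ`, where `none`
represents the symbol ⊤. -/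

variable {α : Type*} [DecidableEq α] [Fintype α]

/-- The partition of the vertex set into `t` pairwise disjoint nonempty types. -/
def IsTypePartition {t : ℕ} (Vp : Fin t → Finset α) : Prop :=
  (∀ i, (Vp i).Nonempty) ∧ (∀ i j, i ≠ j → Disjoint (Vp i) (Vp j)) ∧
    (∀ v : α, ∃ i, v ∈ Vp i)

/-- The signature of a set `X`: `sig Vp X i = |V_i ∩ X|`. -/
def sig {t : ℕ} (Vp : Fin t → Finset α) (X : Finset α) (i : Fin t) : ℕ :=
  ((Vp i) ∩ X).card

/-- The (unique) shape of a set `X`: it is `⊤` (i.e. `none`) at `i` when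
`q ≤ |V_i ∩ X| ≤ |V_i| − q`, and `|V_i ∩ X|` otherwise.  A set `X` has shape `σ`
iff `shapeOf q Vp X = σ`. -/
def shapeOf {t : ℕ} (q : ℕ) (Vp : Fin t → Finset α) (X : Finset α) (i : Fin t) : Option ℕ :=
  if q ≤ sig Vp X i ∧ sig Vp X i ≤ (Vp i).card - q then none else some (sig Vp X i)

/-- A predicate on subsets of `V` is shape-invariant if any two subsets with the same
shape either both satisfy it or both fail it. -/
def ShapeInvariant {t : ℕ} (q : ℕ) (Vp : Fin t → Finset α) (P : Finset α → Prop) : Prop :=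
  ∀ X Y : Finset α, shapeOf q Vp X = shapeOf q Vp Y → (P X ↔ P Y)

/-- `TJSeq P seq ℓ S S'` : the sequence `seq 0, …, seq ℓ` is a TJ(P)-sequence from
`S` to `S'` (of length `ℓ`): consecutive sets differ by a single token jump and
all sets satisfy `P`. -/
def TJSeq (P : Finset α → Prop) (seq : ℕ → Finset α) (ℓ : ℕ) (S S' : Finset α) : Prop :=
  seq 0 = S ∧ seq ℓ = S' ∧ (∀ i ≤ ℓ, P (seq i)) ∧
    ∀ i < ℓ, (seq i \ seq (i + 1)).card = 1 ∧ (seq (i + 1) \ seq i).card = 1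

/-- A shape `σ` is `k`-feasible (w.r.t. `P`) if some set of cardinality `k` with
shape `σ` satisfies `P`. -/
def KFeasible {t : ℕ} (q : ℕ) (Vp : Fin t → Finset α) (P : Finset α → Prop)
    (k : ℕ) (σ : Fin t → Option ℕ) : Prop :=
  ∃ X : Finset α, X.card = k ∧ shapeOf q Vp X = σ ∧ P X

/-- Conditions A1–A3 at index `i` for the pair of shapes `(σ1, σ2)`. -/
def Acond {t : ℕ} (q : ℕ) (Vp : Fin t → Finset α)
    (σ1 σ2 : Fin t → Option ℕ) (i : Fin t) : Prop :=
  (∃ a b, σ1 i = some a ∧ σ2 i = some b ∧ b + 1 = a) ∨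
  (σ1 i = none ∧ σ2 i = some (q - 1)) ∨
  (σ1 i = some ((Vp i).card - q + 1) ∧ σ2 i = none)

/-- Conditions B1–B3 at index `j` for the pair of shapes `(σ1, σ2)`. -/
def Bcond {t : ℕ} (q : ℕ) (Vp : Fin t → Finset α)
    (σ1 σ2 : Fin t → Option ℕ) (j : Fin t) : Prop :=
  (∃ a b, σ1 j = some a ∧ σ2 j = some b ∧ a + 1 = b) ∨
  (σ2 j = none ∧ σ1 j = some (q - 1)) ∨
  (σ2 j = some ((Vp j).card - q + 1) ∧ σ1 j = none)

/-- Condition (2) of adjacency: a witness of size `k` and shape `σ1` with the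
prescribed signatures at the (possibly undefined) designated indices `oi`, `oj`. -/
def Cond2 {t : ℕ} (q : ℕ) (Vp : Fin t → Finset α) (k : ℕ)
    (σ1 : Fin t → Option ℕ) (oi oj : Option (Fin t)) : Prop :=
  ∃ S1 : Finset α, S1.card = k ∧ shapeOf q Vp S1 = σ1 ∧
    (∀ i, oi = some i → σ1 i = none → sig Vp S1 i = q) ∧
    (∀ j, oj = some j → σ1 j = none → sig Vp S1 j = (Vp j).card - q)

/-- Condition (3) of adjacency: a witness of size `k` and shape `σ2` with the
prescribed signatures at the (possibly undefined) designated indices `oi`, `oj`. -/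
def Cond3 {t : ℕ} (q : ℕ) (Vp : Fin t → Finset α) (k : ℕ)
    (σ2 : Fin t → Option ℕ) (oi oj : Option (Fin t)) : Prop :=
  ∃ S2 : Finset α, S2.card = k ∧ shapeOf q Vp S2 = σ2 ∧
    (∀ i, oi = some i → σ2 i = none → sig Vp S2 i = (Vp i).card - q) ∧
    (∀ j, oj = some j → σ2 j = none → sig Vp S2 j = q)

/-- The adjacency conditions (1)–(3) for two shapes: either they disagree at exactly
two indices `i` (satisfying A1–A3) and `j` (satisfying B1–B3), or they disagree at
exactly one index, which satisfies A1–A3 (called `i`) or B1–B3 (called `j`);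
in all cases the witnesses required by conditions (2) and (3) exist. -/
def ShapeAdj {t : ℕ} (q : ℕ) (Vp : Fin t → Finset α) (k : ℕ)
    (σ1 σ2 : Fin t → Option ℕ) : Prop :=
  (∃ i j : Fin t, i ≠ j ∧ (∀ h, σ1 h ≠ σ2 h ↔ (h = i ∨ h = j)) ∧
    Acond q Vp σ1 σ2 i ∧ Bcond q Vp σ1 σ2 j ∧
    Cond2 q Vp k σ1 (some i) (some j) ∧ Cond3 q Vp k σ2 (some i) (some j)) ∨
  (∃ i : Fin t, (∀ h, σ1 h ≠ σ2 h ↔ h = i) ∧ Acond q Vp σ1 σ2 i ∧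
    Cond2 q Vp k σ1 (some i) none ∧ Cond3 q Vp k σ2 (some i) none) ∨
  (∃ j : Fin t, (∀ h, σ1 h ≠ σ2 h ↔ h = j) ∧ Bcond q Vp σ1 σ2 j ∧
    Cond2 q Vp k σ1 none (some j) ∧ Cond3 q Vp k σ2 none (some j))

/-- Adjacency in the size-`k` shape graph `S_k`: the vertices are the `k`-feasible
shapes, and two distinct vertices are joined iff the adjacency conditions hold. -/
def GraphAdj {t : ℕ} (q : ℕ) (Vp : Fin t → Finset α) (P : Finset α → Prop)
    (k : ℕ) (σ1 σ2 : Fin t → Option ℕ) : Prop :=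
  σ1 ≠ σ2 ∧ KFeasible q Vp P k σ1 ∧ KFeasible q Vp P k σ2 ∧ ShapeAdj q Vp k σ1 σ2

/-! A token jump `u ↦ v` with `u ∈ V_i`, `v ∈ V_j`, `i ≠ j`, lowers the signature by one at `i`,
raises it by one at `j`, and changes nothing else. Conditions A1–A3 at `i`, together with the
requirements of (2) and (3) that a witness sit at the boundary `q` or `|V_i| - q` of the `⊤`-range
wherever its shape is `⊤`, say precisely that the signature drops by one at `i` (dually B1–B3
at `j`); this gives the backward direction. Forwards, one jumps a token of the witness `S₁` of (2)
from `V_i` to `V_j`. When only `i` is designated, `|S₁| = |S₂|` yields another index `m` at which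
`S₁` has fewer tokens than `S₂`; both shapes are `⊤` there, and since the `⊤`-range is an
interval the jump into `V_m` keeps it `⊤`. Shape invariance transfers `P` from the feasibility
witnesses. -/

section Jumps

omit [Fintype α]

variable {t q : ℕ} {Vp : Fin t → Finset α}

omit [DecidableEq α] in
theorem IsTypePartition.mem_iff_eq (hVp : IsTypePartition Vp) {v : α} {i : Fin t}
    (hv : v ∈ Vp i) (h : Fin t) : v ∈ Vp h ↔ h = i :=
  ⟨fun hvh => by_contra fun hhi => Finset.disjoint_left.mp (hVp.2.1 h i hhi) hvh hv,
    fun hhi => hhi ▸ hv⟩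

theorem sig_le_card (Vp : Fin t → Finset α) (X : Finset α) (i : Fin t) :
    sig Vp X i ≤ (Vp i).card :=
  Finset.card_le_card Finset.inter_subset_left

theorem IsTypePartition.sum_sig (hVp : IsTypePartition Vp) (X : Finset α) :
    ∑ i, sig Vp X i = X.card := by
  calc ∑ i, sig Vp X i = (Finset.univ.biUnion fun i => Vp i ∩ X).card :=
        (Finset.card_biUnion fun i _ j _ hij =>
          (hVp.2.1 i j hij).mono Finset.inter_subset_left Finset.inter_subset_left).symm
    _ = X.card := by
        congr 1
        ext x
        simpa using fun _ => hVp.2.2 x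

theorem IsTypePartition.exists_sig_lt (hVp : IsTypePartition Vp) {X Y : Finset α}
    (hcard : X.card = Y.card) {i : Fin t} (hi : sig Vp Y i < sig Vp X i) :
    ∃ m ≠ i, sig Vp X m < sig Vp Y m := by
  by_contra! hle
  have hlt : ∑ m, sig Vp Y m < ∑ m, sig Vp X m :=
    Finset.sum_lt_sum (fun m _ => (eq_or_ne m i).elim (· ▸ hi.le) (hle m))
      ⟨i, Finset.mem_univ i, hi⟩
  rw [hVp.sum_sig, hVp.sum_sig] at hlt
  omega

theorem sig_add_card_inter_sdiff (Vp : Fin t → Finset α) (S T : Finset α) (h : Fin t) :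
    sig Vp S h + (Vp h ∩ (T \ S)).card = sig Vp T h + (Vp h ∩ (S \ T)).card := by
  have hunion : ∀ A B : Finset α,
      (Vp h ∩ A).card + (Vp h ∩ (B \ A)).card = (Vp h ∩ (A ∪ B)).card := fun A B => by
    rw [← Finset.union_sdiff_self_eq_union, Finset.inter_union_distrib_left,
      Finset.card_union_of_disjoint (Finset.disjoint_sdiff.mono Finset.inter_subset_right
        Finset.inter_subset_right)]
  rw [sig, sig, hunion, hunion, Finset.union_comm]

theorem IsTypePartition.sig_add_ite_of_sdiff_eq_singleton (hVp : IsTypePartition Vp)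
    {S T : Finset α} {u v : α} {i j : Fin t} (hu : S \ T = {u}) (hv : T \ S = {v})
    (hui : u ∈ Vp i) (hvj : v ∈ Vp j) (h : Fin t) :
    sig Vp T h + (if h = i then 1 else 0) = sig Vp S h + (if h = j then 1 else 0) := by
  have hcard : ∀ {w : α} {k : Fin t}, w ∈ Vp k → (Vp h ∩ {w}).card = if h = k then 1 else 0 := by
    intro w k hw
    split_ifs with hhk
    · rw [Finset.inter_singleton_of_mem ((hVp.mem_iff_eq hw h).2 hhk), Finset.card_singleton]
    · rw [Finset.inter_singleton_of_notMem (mt (hVp.mem_iff_eq hw h).1 hhk), Finset.card_empty]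
  have := sig_add_card_inter_sdiff Vp S T h
  rw [hu, hv, hcard hui, hcard hvj] at this
  omega

theorem shapeOf_congr {X Y : Finset α} {i : Fin t} (h : sig Vp X i = sig Vp Y i) :
    shapeOf q Vp X i = shapeOf q Vp Y i := by
  simp only [shapeOf, h]

theorem shapeOf_eq_of_sig_mem_uIcc {X Y Z : Finset α} {i : Fin t}
    (hXY : shapeOf q Vp X i = shapeOf q Vp Y i)
    (hZ : sig Vp Z i ∈ Set.uIcc (sig Vp X i) (sig Vp Y i)) :
    shapeOf q Vp Z i = shapeOf q Vp X i := by
  rw [Set.mem_uIcc] at hZ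
  unfold shapeOf at *
  split_ifs at * <;> simp_all <;> omega

theorem acond_and_iff (hq : 1 ≤ q) {X Y : Finset α} {i : Fin t} :
    (Acond q Vp (shapeOf q Vp X) (shapeOf q Vp Y) i ∧
        (shapeOf q Vp X i = none → sig Vp X i = q) ∧
        (shapeOf q Vp Y i = none → sig Vp Y i = (Vp i).card - q)) ↔
      shapeOf q Vp X i ≠ shapeOf q Vp Y i ∧ sig Vp X i = sig Vp Y i + 1 := by
  unfold Acond shapeOf
  split_ifs <;> simp <;> omega

omit [DecidableEq α] in
theorem bcond_iff_acond_swap {σ1 σ2 : Fin t → Option ℕ} {j : Fin t} :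
    Bcond q Vp σ1 σ2 j ↔ Acond q Vp σ2 σ1 j := by
  unfold Acond Bcond
  grind

theorem bcond_and_iff (hq : 1 ≤ q) {X Y : Finset α} {j : Fin t} :
    (Bcond q Vp (shapeOf q Vp X) (shapeOf q Vp Y) j ∧
        (shapeOf q Vp X j = none → sig Vp X j = (Vp j).card - q) ∧
        (shapeOf q Vp Y j = none → sig Vp Y j = q)) ↔
      shapeOf q Vp X j ≠ shapeOf q Vp Y j ∧ sig Vp Y j = sig Vp X j + 1 := by
  rw [bcond_iff_acond_swap, ne_comm, ← acond_and_iff hq]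
  tauto

end Jumps

section Adjacency

omit [Fintype α]

variable {t q k : ℕ} {Vp : Fin t → Finset α}

theorem IsTypePartition.exists_jump_shapeOf_eq (hVp : IsTypePartition Vp) {S1 S2 : Finset α}
    {i j : Fin t} (hij : i ≠ j) (hi : sig Vp S2 i < sig Vp S1 i)
    (hj : sig Vp S1 j < sig Vp S2 j)
    (hdiff : ∀ h, shapeOf q Vp S1 h ≠ shapeOf q Vp S2 h →
      (h = i ∧ sig Vp S2 h + 1 = sig Vp S1 h) ∨ (h = j ∧ sig Vp S1 h + 1 = sig Vp S2 h)) :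
    ∃ T : Finset α, T.card = S1.card ∧ shapeOf q Vp T = shapeOf q Vp S2 ∧
      (S1 \ T).card = 1 ∧ (T \ S1).card = 1 := by
  obtain ⟨u, hui, hu⟩ : ∃ u ∈ Vp i, u ∈ S1 := by
    simpa [Finset.Nonempty] using Finset.card_pos.mp ((Nat.zero_le _).trans_lt hi)
  obtain ⟨v, hvj, hv⟩ : ∃ v ∈ Vp j, v ∉ S1 := by
    by_contra! hsub
    have : sig Vp S1 j = (Vp j).card := by rw [sig, Finset.inter_eq_left.mpr hsub]
    have := sig_le_card Vp S2 j
    omega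
  have huv : u ≠ v := fun huv => hv (huv ▸ hu)
  set T := insert v (S1.erase u)
  have hTu : S1 \ T = {u} := by
    ext x
    simp only [Finset.mem_sdiff, Finset.mem_insert, Finset.mem_erase, Finset.mem_singleton, T]
    grind
  have hTv : T \ S1 = {v} := by
    ext x
    simp only [Finset.mem_sdiff, Finset.mem_insert, Finset.mem_erase, Finset.mem_singleton, T]
    grind
  refine ⟨T, ?_, funext fun h => ?_, by simp [hTu], by simp [hTv]⟩
  · rw [Finset.card_insert_of_notMem (by simp [hv]), Finset.card_erase_add_one hu]
  have hsig := hVp.sig_add_ite_of_sdiff_eq_singleton hTu hTv hui hvj h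
  by_cases hh : shapeOf q Vp S1 h = shapeOf q Vp S2 h
  · rw [shapeOf_eq_of_sig_mem_uIcc hh (Set.mem_uIcc.2 ?_), hh]
    split_ifs at hsig <;> subst_vars <;> omega
  · apply shapeOf_congr
    rcases hdiff h hh with ⟨rfl, e⟩ | ⟨rfl, e⟩ <;>
      simp only [hij, hij.symm, ↓reduceIte, add_zero] at hsig <;> omega

theorem IsTypePartition.exists_jump_of_shapeAdj (hq : 1 ≤ q) (hVp : IsTypePartition Vp)
    {σ1 σ2 : Fin t → Option ℕ} (hadj : ShapeAdj q Vp k σ1 σ2) :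
    ∃ S1 S2 : Finset α, S1.card = k ∧ S2.card = k ∧
      shapeOf q Vp S1 = σ1 ∧ shapeOf q Vp S2 = σ2 ∧
      (S1 \ S2).card = 1 ∧ (S2 \ S1).card = 1 := by
  obtain ⟨S1, S2, hk1, hk2, rfl, rfl, i, j, hij, hi, hj, hdiff⟩ :
      ∃ S1 S2 : Finset α, S1.card = k ∧ S2.card = k ∧
        shapeOf q Vp S1 = σ1 ∧ shapeOf q Vp S2 = σ2 ∧ ∃ i j, i ≠ j ∧
        sig Vp S2 i < sig Vp S1 i ∧ sig Vp S1 j < sig Vp S2 j ∧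
        ∀ h, σ1 h ≠ σ2 h →
          (h = i ∧ sig Vp S2 h + 1 = sig Vp S1 h) ∨ (h = j ∧ sig Vp S1 h + 1 = sig Vp S2 h) := by
    rcases hadj with
      ⟨i, j, hij, hchar, hA, hB, ⟨S1, hk1, rfl, hS1i, hS1j⟩, ⟨S2, hk2, rfl, hS2i, hS2j⟩⟩ |
      ⟨i, hchar, hA, ⟨S1, hk1, rfl, hS1i, -⟩, ⟨S2, hk2, rfl, hS2i, -⟩⟩ |
      ⟨j, hchar, hB, ⟨S1, hk1, rfl, -, hS1j⟩, ⟨S2, hk2, rfl, -, hS2j⟩⟩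
    · have hi := ((acond_and_iff hq).1 ⟨hA, hS1i i rfl, hS2i i rfl⟩).2
      have hj := ((bcond_and_iff hq).1 ⟨hB, hS1j j rfl, hS2j j rfl⟩).2
      refine ⟨S1, S2, hk1, hk2, rfl, rfl, i, j, hij, by omega, by omega, fun h hh => ?_⟩
      rcases (hchar h).1 hh with rfl | rfl
      exacts [Or.inl ⟨rfl, hi.symm⟩, Or.inr ⟨rfl, hj.symm⟩]
    · have hi := ((acond_and_iff hq).1 ⟨hA, hS1i i rfl, hS2i i rfl⟩).2
      obtain ⟨m, hmi, hm⟩ := hVp.exists_sig_lt (hk1.trans hk2.symm) (i := i) (by omega)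
      refine ⟨S1, S2, hk1, hk2, rfl, rfl, i, m, hmi.symm, by omega, hm, fun h hh => ?_⟩
      obtain rfl := (hchar h).1 hh
      exact Or.inl ⟨rfl, hi.symm⟩
    · have hj := ((bcond_and_iff hq).1 ⟨hB, hS1j j rfl, hS2j j rfl⟩).2
      obtain ⟨m, hmj, hm⟩ := hVp.exists_sig_lt (hk2.trans hk1.symm) (i := j) (by omega)
      refine ⟨S1, S2, hk1, hk2, rfl, rfl, m, j, hmj, hm, by omega, fun h hh => ?_⟩
      obtain rfl := (hchar h).1 hh
      exact Or.inr ⟨rfl, hj.symm⟩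
  obtain ⟨T, hT, hTs, hd1, hd2⟩ := hVp.exists_jump_shapeOf_eq hij hi hj hdiff
  exact ⟨S1, T, hk1, hT.trans hk1, rfl, hTs, hd1, hd2⟩

theorem IsTypePartition.exists_sig_eq_succ_of_jump (hVp : IsTypePartition Vp)
    {S1 S2 : Finset α} (hne : shapeOf q Vp S1 ≠ shapeOf q Vp S2)
    (hd1 : (S1 \ S2).card = 1) (hd2 : (S2 \ S1).card = 1) :
    ∃ i j, i ≠ j ∧ sig Vp S1 i = sig Vp S2 i + 1 ∧ sig Vp S2 j = sig Vp S1 j + 1 ∧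
      ∀ h, shapeOf q Vp S1 h ≠ shapeOf q Vp S2 h → h = i ∨ h = j := by
  obtain ⟨u, hu⟩ := Finset.card_eq_one.mp hd1
  obtain ⟨v, hv⟩ := Finset.card_eq_one.mp hd2
  obtain ⟨i, hui⟩ := hVp.2.2 u
  obtain ⟨j, hvj⟩ := hVp.2.2 v
  have hsig := hVp.sig_add_ite_of_sdiff_eq_singleton hu hv hui hvj
  have hij : i ≠ j := by
    rintro rfl
    exact hne (funext fun h => (shapeOf_congr (by simpa using hsig h)).symm)
  refine ⟨i, j, hij, by simpa [hij] using (hsig i).symm, by simpa [hij.symm] using hsig j,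
    fun h hh => ?_⟩
  by_contra! hhij
  exact hh (shapeOf_congr (by simpa [hhij] using (hsig h).symm))

theorem IsTypePartition.shapeAdj_of_jump (hq : 1 ≤ q) (hVp : IsTypePartition Vp)
    {S1 S2 : Finset α} (hk1 : S1.card = k) (hk2 : S2.card = k)
    (hne : shapeOf q Vp S1 ≠ shapeOf q Vp S2)
    (hd1 : (S1 \ S2).card = 1) (hd2 : (S2 \ S1).card = 1) :
    ShapeAdj q Vp k (shapeOf q Vp S1) (shapeOf q Vp S2) := by
  obtain ⟨i, j, hij, hsi, hsj, hsame⟩ := hVp.exists_sig_eq_succ_of_jump hne hd1 hd2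
  have hA := (acond_and_iff hq (Vp := Vp) (X := S1) (Y := S2) (i := i)).2
  have hB := (bcond_and_iff hq (Vp := Vp) (X := S1) (Y := S2) (j := j)).2
  by_cases di : shapeOf q Vp S1 i = shapeOf q Vp S2 i <;>
    by_cases dj : shapeOf q Vp S1 j = shapeOf q Vp S2 j
  · refine absurd (funext fun h => ?_) hne
    by_contra hh
    rcases hsame h hh with rfl | rfl <;> contradiction
  · obtain ⟨hB, hB1, hB2⟩ := hB ⟨dj, hsj⟩
    refine Or.inr (Or.inr ⟨j, fun h => ⟨fun hh => ?_, by rintro rfl; exact dj⟩, hB,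
      ⟨S1, hk1, rfl, by rintro _ ⟨⟩, by rintro _ ⟨⟩; exact hB1⟩,
      ⟨S2, hk2, rfl, by rintro _ ⟨⟩, by rintro _ ⟨⟩; exact hB2⟩⟩)
    exact (hsame h hh).resolve_left (by rintro rfl; exact hh di)
  · obtain ⟨hA, hA1, hA2⟩ := hA ⟨di, hsi⟩
    refine Or.inr (Or.inl ⟨i, fun h => ⟨fun hh => ?_, by rintro rfl; exact di⟩, hA,
      ⟨S1, hk1, rfl, by rintro _ ⟨⟩; exact hA1, by rintro _ ⟨⟩⟩,
      ⟨S2, hk2, rfl, by rintro _ ⟨⟩; exact hA2, by rintro _ ⟨⟩⟩⟩)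
    exact (hsame h hh).resolve_right (by rintro rfl; exact hh dj)
  · obtain ⟨hA, hA1, hA2⟩ := hA ⟨di, hsi⟩
    obtain ⟨hB, hB1, hB2⟩ := hB ⟨dj, hsj⟩
    refine Or.inl ⟨i, j, hij, fun h => ⟨hsame h, by rintro (rfl | rfl) <;> assumption⟩, hA, hB,
      ⟨S1, hk1, rfl, by rintro _ ⟨⟩; exact hA1, by rintro _ ⟨⟩; exact hB1⟩,
      ⟨S2, hk2, rfl, by rintro _ ⟨⟩; exact hA2, by rintro _ ⟨⟩; exact hB2⟩⟩

theorem ShapeInvariant.of_kFeasible {P : Finset α → Prop}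
    (hP : ShapeInvariant q Vp P) {σ : Fin t → Option ℕ} (hσ : KFeasible q Vp P k σ)
    {X : Finset α} (hX : shapeOf q Vp X = σ) : P X := by
  obtain ⟨Y, -, hY, hPY⟩ := hσ
  exact (hP X Y (hX.trans hY.symm)).2 hPY

end Adjacency

/-- Two distinct `k`-feasible shapes are adjacent in the size-`k`
shape graph iff there exist sets `S1, S2` of cardinality `k`, both satisfying `P`,
with the respective shapes, such that `|S1 \ S2| = |S2 \ S1| = 1`. -/
theorem stmt1 {t q : ℕ} (hq : 1 ≤ q) (Vp : Fin t → Finset α)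
    (hVp : IsTypePartition Vp) (P : Finset α → Prop) (hP : ShapeInvariant q Vp P)
    (k : ℕ) (σ1 σ2 : Fin t → Option ℕ) (hne : σ1 ≠ σ2)
    (h1 : KFeasible q Vp P k σ1) (h2 : KFeasible q Vp P k σ2) :
    ShapeAdj q Vp k σ1 σ2 ↔
      ∃ S1 S2 : Finset α, P S1 ∧ P S2 ∧ S1.card = k ∧ S2.card = k ∧
        shapeOf q Vp S1 = σ1 ∧ shapeOf q Vp S2 = σ2 ∧
        (S1 \ S2).card = 1 ∧ (S2 \ S1).card = 1 := by
  constructor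
  · intro hadj
    obtain ⟨S1, S2, hk1, hk2, hs1, hs2, hd1, hd2⟩ := hVp.exists_jump_of_shapeAdj hq hadj
    exact ⟨S1, S2, ShapeInvariant.of_kFeasible hP h1 hs1,
      ShapeInvariant.of_kFeasible hP h2 hs2, hk1, hk2, hs1, hs2, hd1, hd2⟩
  · rintro ⟨S1, S2, -, -, hk1, hk2, rfl, rfl, hd1, hd2⟩
    exact hVp.shapeAdj_of_jump hq hk1 hk2 hne hd1 hd2
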